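/- Let 0 < q < 1, 0 < p_c ≤ 1, n ≥ 1 integer. The equilibrium reward function α*(p) = (σ(n − 1 + (1 − z(p))^n) − n(γ − η))/(2(1 − (1 − z(p))^n)), with z(p) = (1−q)p_c·p, is strictly decreasing in p on (0, 1] whenever σ(n−1) − n(γ−η) > 0 and σ > 0. -/

import Mathlib

/-!
With `c = (1 - q) pc ∈ (0, 1]` and `w(p) = (1 - c p)^n`, the reward is `g(w(p))` where
`g(w) = (A + σ w) / (2 (1 - w))` and `A = σ (n - 1) - n (γ - η)`. Since
`g(w) = ((A + σ) / (1 - w) - σ) / 2` and `A + σ > 0`, `g` is strictly increasing on `w < 1`,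
while `w` is strictly decreasing on `(0, 1]` and takes values in `[0, 1)` there.
-/

open Set

theorem strictMonoOn_affine_div_one_sub {a b k : ℝ} (hk : 0 < k) (hab : 0 < a + b) :
    StrictMonoOn (fun w : ℝ => (a + b * w) / (k * (1 - w))) (Iio 1) := by
  intro x hx y hy hxy
  have hx' : 0 < k * (1 - x) := mul_pos hk (sub_pos.2 hx)
  have hy' : 0 < k * (1 - y) := mul_pos hk (sub_pos.2 hy)
  rw [div_lt_div_iff₀ hx' hy']
  have cross : (a + b * y) * (k * (1 - x)) - (a + b * x) * (k * (1 - y)) =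
      k * (a + b) * (y - x) := by
    ring
  linarith [mul_pos (mul_pos hk hab) (sub_pos.2 hxy)]

theorem strictAntiOn_one_sub_mul_pow {c : ℝ} (hc : 0 < c) {n : ℕ} (hn : n ≠ 0) :
    StrictAntiOn (fun p : ℝ => (1 - c * p) ^ n) (Iic c⁻¹) := by
  have base_nonneg {p : ℝ} (hp : p ≤ c⁻¹) : 0 ≤ 1 - c * p := by
    rw [sub_nonneg]
    exact (mul_le_mul_of_nonneg_left hp hc.le).trans_eq (mul_inv_cancel₀ hc.ne')
  intro x hx y hy hxy
  exact pow_left_strictMonoOn₀ hn (base_nonneg hy) (base_nonneg hx)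
    (by linarith [mul_lt_mul_of_pos_left hxy hc])

theorem reward_strict_anti (q pc σ γ η : ℝ) (hq0 : 0 < q) (hq1 : q < 1)
    (hpc0 : 0 < pc) (hpc1 : pc ≤ 1) (n : ℕ) (hn : 1 ≤ n)
    (hσ : 0 < σ) (hnum : 0 < σ * ((n : ℝ) - 1) - (n : ℝ) * (γ - η)) :
    StrictAntiOn (fun p : ℝ =>
        (σ * ((n : ℝ) - 1 + (1 - (1 - q) * pc * p) ^ n) - (n : ℝ) * (γ - η))
          / (2 * (1 - (1 - (1 - q) * pc * p) ^ n)))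
      (Set.Ioc 0 1) := by
  set c := (1 - q) * pc
  have hc : 0 < c := mul_pos (sub_pos.2 hq1) hpc0
  have hc1 : c ≤ 1 := mul_le_one₀ (by linarith) hpc0.le hpc1
  have hn0 : n ≠ 0 := by omega
  have hsub : Ioc 0 1 ⊆ Iic c⁻¹ := fun p hp => hp.2.trans ((one_le_inv₀ hc).2 hc1)
  have hmaps : MapsTo (fun p : ℝ => (1 - c * p) ^ n) (Ioc 0 1) (Iio 1) := fun p hp =>
    show (1 - c * p) ^ n < 1 from pow_lt_one₀ (by linarith [mul_le_of_le_one_right hc.le hp.2])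
      (by linarith [mul_pos hc hp.1]) hn0
  have hg := strictMonoOn_affine_div_one_sub (a := σ * ((n : ℝ) - 1) - (n : ℝ) * (γ - η))
    (b := σ) two_pos (by linarith)
  convert hg.comp_strictAntiOn ((strictAntiOn_one_sub_mul_pow hc hn0).mono hsub) hmaps using 2
  simp only [Function.comp_apply]
  ring
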